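/- Let W : D → ℂ^{N×N} be measurable and positive definite a.e., w a scalar weight, and r : D → ℂ^N a unit vector valued function. If the projection P_r : L^p(W) → L^p(w), P_r(f) = ⟨f, r⟩, is bounded with operator norm at most C^{1/p}, then w(t)^{1/p}·‖W^{-1/p}(t) r(t)‖ ≤ C^{1/p} for almost every t ∈ D. -/

import Mathlib

set_option maxHeartbeats 1000000

open MeasureTheory ENNReal ComplexInnerProductSpace
open scoped ComplexOrder

noncomputable def mpow {N : ℕ} (A : Matrix (Fin N) (Fin N) ℂ) (s : ℝ) :
    Matrix (Fin N) (Fin N) ℂ :=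
  if hA : A.IsHermitian then hA.cfc (fun x => x ^ s) else 0

lemma mpow_eq_cfc {N : ℕ} {A : Matrix (Fin N) (Fin N) ℂ} (hA : A.IsHermitian) (s : ℝ) :
    mpow A s = cfc (fun x : ℝ => x ^ s) A := by
  rw [mpow, dif_pos hA]
  exact (hA.cfc_eq _).symm

lemma spectrum_pos {N : ℕ} {A : Matrix (Fin N) (Fin N) ℂ} (hA : A.PosDef) :
    ∀ x ∈ spectrum ℝ A, 0 < x := by
  rw [hA.1.spectrum_real_eq_range_eigenvalues]
  rintro x ⟨i, rfl⟩
  exact hA.eigenvalues_pos i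

lemma rpow_continuousOn {N : ℕ} {A : Matrix (Fin N) (Fin N) ℂ} (hA : A.PosDef) (s : ℝ) :
    ContinuousOn (fun x : ℝ => x ^ s) (spectrum ℝ A) := fun x hx =>
  (Real.continuousAt_rpow_const x s (Or.inl (spectrum_pos hA x hx).ne')).continuousWithinAt

lemma mpow_isHermitian {N : ℕ} {A : Matrix (Fin N) (Fin N) ℂ} (hA : A.IsHermitian) (s : ℝ) :
    (mpow A s).IsHermitian := by
  rw [mpow_eq_cfc hA]
  exact cfc_predicate _ A

lemma mpow_mul {N : ℕ} {A : Matrix (Fin N) (Fin N) ℂ} (hA : A.PosDef) (a b : ℝ) :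
    mpow A a * mpow A b = mpow A (a + b) := by
  rw [mpow_eq_cfc hA.1, mpow_eq_cfc hA.1, mpow_eq_cfc hA.1,
    ← cfc_mul _ _ A (rpow_continuousOn hA a) (rpow_continuousOn hA b)]
  exact cfc_congr fun x hx => (Real.rpow_add (spectrum_pos hA x hx) a b).symm

lemma mpow_zero {N : ℕ} {A : Matrix (Fin N) (Fin N) ℂ} (hA : A.PosDef) :
    mpow A 0 = 1 := by
  rw [mpow_eq_cfc hA.1]
  have : cfc (fun x : ℝ => x ^ (0:ℝ)) A = cfc (1 : ℝ → ℝ) A :=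
    cfc_congr fun x _ => Real.rpow_zero x
  rw [this]
  exact cfc_one ℝ A hA.1

lemma toEuclideanLin_mul_apply {N : ℕ} (M M' : Matrix (Fin N) (Fin N) ℂ)
    (x : EuclideanSpace ℂ (Fin N)) :
    Matrix.toEuclideanLin (M * M') x = Matrix.toEuclideanLin M (Matrix.toEuclideanLin M' x) := by
  simp [Matrix.toEuclideanLin_apply, Matrix.mulVec_mulVec]

lemma toEuclideanLin_one_apply {N : ℕ} (x : EuclideanSpace ℂ (Fin N)) :
    Matrix.toEuclideanLin (1 : Matrix (Fin N) (Fin N) ℂ) x = x := by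
  rw [Matrix.toEuclideanLin_apply, Matrix.one_mulVec]

lemma toEuclideanLin_herm_inner {N : ℕ} {B : Matrix (Fin N) (Fin N) ℂ} (hB : B.IsHermitian)
    (x y : EuclideanSpace ℂ (Fin N)) :
    (⟪Matrix.toEuclideanLin B x, y⟫ : ℂ) = ⟪x, Matrix.toEuclideanLin B y⟫ := by
  have h2 := LinearMap.adjoint_inner_left (𝕜 := ℂ) (Matrix.toEuclideanLin B) y x
  have h : LinearMap.adjoint (Matrix.toEuclideanLin B) = Matrix.toEuclideanLin B := by
    rw [← Matrix.toEuclideanLin_conjTranspose_eq_adjoint, hB.eq]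
  rw [h] at h2
  exact h2

/-- Necessity in the projection theorem: if `P_r f = ⟨f, r⟩` is bounded from `L^p(W)`
to `L^p(w)` with operator norm at most `C^{1/p}`, then `w^{1/p}‖W^{-1/p}r‖ ≤ C^{1/p}` a.e. -/
theorem ae_bound_of_projection_bounded
    {N d : ℕ} (p : ℝ) (hp : 1 < p)
    (W : EuclideanSpace ℝ (Fin d) → Matrix (Fin N) (Fin N) ℂ)
    (hWmeas : ∀ i j, Measurable fun t => W t i j)
    (hWpos : ∀ᵐ t, (W t).PosDef)
    (w : EuclideanSpace ℝ (Fin d) → ℝ) (hwmeas : Measurable w) (hwpos : ∀ᵐ t, 0 < w t)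
    (r : EuclideanSpace ℝ (Fin d) → EuclideanSpace ℂ (Fin N))
    (hrmeas : ∀ k, Measurable fun t => (⟪EuclideanSpace.single k (1 : ℂ), r t⟫ : ℂ))
    (hr : ∀ᵐ t, ‖r t‖ = 1)
    (C : ℝ) (hC : 0 ≤ C)
    (hbdd : ∀ f : EuclideanSpace ℝ (Fin d) → EuclideanSpace ℂ (Fin N),
      (∀ k, Measurable fun t => (⟪EuclideanSpace.single k (1 : ℂ), f t⟫ : ℂ)) →
      (∫⁻ t, (‖(⟪f t, r t⟫ : ℂ)‖₊ : ℝ≥0∞) ^ p * ENNReal.ofReal (w t)) ^ (1 / p)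
        ≤ ENNReal.ofReal (C ^ (1 / p)) *
          (∫⁻ t, (‖Matrix.toEuclideanLin (mpow (W t) (1 / p)) (f t)‖₊ : ℝ≥0∞) ^ p)
            ^ (1 / p)) :
    ∀ᵐ t, (w t) ^ (1 / p) *
        ‖Matrix.toEuclideanLin (mpow (W t) (-(1 / p))) (r t)‖ ≤ C ^ (1 / p) := by
  classical
  have hp0 : (0:ℝ) < p := lt_trans one_pos hp
  have hpne : p ≠ 0 := ne_of_gt hp0
  have hrk : ∀ k, Measurable fun t => r t k := by
    intro k
    have h := hrmeas k
    simpa [EuclideanSpace.inner_single_left] using h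
  -- Step A : for each fixed vector v, an a.e. pointwise bound
  have key : ∀ v : EuclideanSpace ℂ (Fin N),
      ∀ᵐ t, ((‖(⟪v, r t⟫ : ℂ)‖₊ : ℝ≥0∞) ^ p * ENNReal.ofReal (w t))
        ≤ ENNReal.ofReal C
          * (‖Matrix.toEuclideanLin (mpow (W t) (1 / p)) v‖₊ : ℝ≥0∞) ^ p := by
    intro v
    have hinner : Measurable fun t => (⟪v, r t⟫ : ℂ) := by
      have hrepr : (fun t => (⟪v, r t⟫ : ℂ))
          = fun t => ∑ k, (starRingEnd ℂ) (v k) * r t k := by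
        funext t
        simp [PiLp.inner_apply, RCLike.inner_apply, mul_comm]
      rw [hrepr]
      exact Finset.measurable_sum _ fun k _ => measurable_const.mul (hrk k)
    refine ae_le_of_forall_setLIntegral_le_of_sigmaFinite
      (((hinner.nnnorm.coe_nnreal_ennreal).pow measurable_const).mul hwmeas.ennreal_ofReal)
      fun E hE _ => ?_
    have hbE := hbdd (E.indicator fun _ => v) ?_
    swap
    · intro k
      have hcomp : (fun t => (⟪EuclideanSpace.single k (1:ℂ), (E.indicator fun _ => v) t⟫ : ℂ))
          = E.indicator fun _ => (⟪EuclideanSpace.single k (1:ℂ), v⟫ : ℂ) := by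
        funext t
        by_cases ht : t ∈ E <;>
          simp [Set.indicator_of_mem, Set.indicator_of_notMem, ht]
      rw [hcomp]
      exact measurable_const.indicator hE
    have h1 : (∫⁻ t, (‖(⟪(E.indicator fun _ => v) t, r t⟫ : ℂ)‖₊ : ℝ≥0∞) ^ p
          * ENNReal.ofReal (w t))
        = ∫⁻ t in E, (‖(⟪v, r t⟫ : ℂ)‖₊ : ℝ≥0∞) ^ p * ENNReal.ofReal (w t) := by
      rw [← lintegral_indicator hE]
      refine lintegral_congr fun t => ?_
      by_cases ht : t ∈ E
      · simp [Set.indicator_of_mem ht]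
      · simp [Set.indicator_of_notMem ht, ENNReal.zero_rpow_of_pos hp0]
    have h2 : (∫⁻ t, (‖Matrix.toEuclideanLin (mpow (W t) (1 / p))
            ((E.indicator fun _ => v) t)‖₊ : ℝ≥0∞) ^ p)
        = ∫⁻ t in E, (‖Matrix.toEuclideanLin (mpow (W t) (1 / p)) v‖₊ : ℝ≥0∞) ^ p := by
      rw [← lintegral_indicator hE]
      refine lintegral_congr fun t => ?_
      by_cases ht : t ∈ E
      · simp [Set.indicator_of_mem ht]
      · simp [Set.indicator_of_notMem ht, ENNReal.zero_rpow_of_pos hp0]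
    rw [h1, h2] at hbE
    rw [lintegral_const_mul' _ _ ENNReal.ofReal_ne_top]
    have hrw : (∫⁻ t in E, (‖(⟪v, r t⟫ : ℂ)‖₊ : ℝ≥0∞) ^ p * ENNReal.ofReal (w t))
        = ((∫⁻ t in E, (‖(⟪v, r t⟫ : ℂ)‖₊ : ℝ≥0∞) ^ p * ENNReal.ofReal (w t)) ^ (1/p)) ^ p := by
      rw [← ENNReal.rpow_mul, one_div_mul_cancel hpne, ENNReal.rpow_one]
    rw [hrw]
    calc ((∫⁻ t in E, (‖(⟪v, r t⟫ : ℂ)‖₊ : ℝ≥0∞) ^ p * ENNReal.ofReal (w t)) ^ (1/p)) ^ p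
        ≤ (ENNReal.ofReal (C ^ (1/p))
            * (∫⁻ t in E, (‖Matrix.toEuclideanLin (mpow (W t) (1 / p)) v‖₊ : ℝ≥0∞) ^ p)
              ^ (1/p)) ^ p := ENNReal.rpow_le_rpow hbE hp0.le
      _ = ENNReal.ofReal C
            * ∫⁻ t in E, (‖Matrix.toEuclideanLin (mpow (W t) (1 / p)) v‖₊ : ℝ≥0∞) ^ p := by
          rw [ENNReal.mul_rpow_of_nonneg _ _ hp0.le, ← ENNReal.rpow_mul,
            one_div_mul_cancel hpne, ENNReal.rpow_one,
            ENNReal.ofReal_rpow_of_nonneg (Real.rpow_nonneg hC _) hp0.le,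
            ← Real.rpow_mul hC, one_div_mul_cancel hpne, Real.rpow_one]
  -- Step B : combine over a dense sequence of vectors
  obtain ⟨u, hu⟩ := TopologicalSpace.exists_dense_seq (EuclideanSpace ℂ (Fin N))
  have hall : ∀ᵐ t, ∀ n : ℕ,
      ((‖(⟪u n, r t⟫ : ℂ)‖₊ : ℝ≥0∞) ^ p * ENNReal.ofReal (w t))
        ≤ ENNReal.ofReal C
          * (‖Matrix.toEuclideanLin (mpow (W t) (1 / p)) (u n)‖₊ : ℝ≥0∞) ^ p :=
    ae_all_iff.mpr fun n => key (u n)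
  filter_upwards [hall, hWpos, hwpos, hr] with t hK hW hw1 hr1
  -- Step C : pointwise argument
  have herm : (W t).IsHermitian := hW.1
  -- convert the ENNReal bounds to real bounds
  have hrealn : ∀ n : ℕ, ‖(⟪u n, r t⟫ : ℂ)‖ ^ p * w t
      ≤ C * ‖Matrix.toEuclideanLin (mpow (W t) (1 / p)) (u n)‖ ^ p := by
    intro n
    have h := hK n
    have e1 : ((‖(⟪u n, r t⟫ : ℂ)‖₊ : ℝ≥0∞)) ^ p * ENNReal.ofReal (w t)
        = ENNReal.ofReal (‖(⟪u n, r t⟫ : ℂ)‖ ^ p * w t) := by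
      rw [← ENNReal.ofReal_coe_nnreal, coe_nnnorm,
        ENNReal.ofReal_rpow_of_nonneg (norm_nonneg _) hp0.le,
        ← ENNReal.ofReal_mul (Real.rpow_nonneg (norm_nonneg _) _)]
    have e2 : ENNReal.ofReal C
          * ((‖Matrix.toEuclideanLin (mpow (W t) (1 / p)) (u n)‖₊ : ℝ≥0∞)) ^ p
        = ENNReal.ofReal (C * ‖Matrix.toEuclideanLin (mpow (W t) (1 / p)) (u n)‖ ^ p) := by
      rw [← ENNReal.ofReal_coe_nnreal, coe_nnnorm,
        ENNReal.ofReal_rpow_of_nonneg (norm_nonneg _) hp0.le,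
        ← ENNReal.ofReal_mul hC]
    rw [e1, e2] at h
    exact (ENNReal.ofReal_le_ofReal_iff
      (mul_nonneg hC (Real.rpow_nonneg (norm_nonneg _) _))).mp h
  -- extend to all vectors by density
  have hrealv : ∀ v : EuclideanSpace ℂ (Fin N), ‖(⟪v, r t⟫ : ℂ)‖ ^ p * w t
      ≤ C * ‖Matrix.toEuclideanLin (mpow (W t) (1 / p)) v‖ ^ p := by
    have hcl : IsClosed {v : EuclideanSpace ℂ (Fin N) | ‖(⟪v, r t⟫ : ℂ)‖ ^ p * w t
        ≤ C * ‖Matrix.toEuclideanLin (mpow (W t) (1 / p)) v‖ ^ p} := by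
      apply isClosed_le
      · exact ((Continuous.inner continuous_id continuous_const).norm.rpow_const
          (fun _ => Or.inr hp0.le)).mul continuous_const
      · exact continuous_const.mul
          (((Matrix.toEuclideanLin (mpow (W t) (1 / p))).continuous_of_finiteDimensional).norm.rpow_const
            (fun _ => Or.inr hp0.le))
    intro v
    have hv : v ∈ closure (Set.range u) := hu v
    exact closure_minimal (by rintro _ ⟨n, rfl⟩; exact hrealn n) hcl hv
  -- specialize to v₀ = W^{-2/p} r
  set Tr : EuclideanSpace ℂ (Fin N) :=
    Matrix.toEuclideanLin (mpow (W t) (-(1 / p))) (r t) with hTr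
  set v0 : EuclideanSpace ℂ (Fin N) :=
    Matrix.toEuclideanLin (mpow (W t) (-(2 / p))) (r t) with hv0
  have h2p : mpow (W t) (-(2 / p)) = mpow (W t) (-(1 / p)) * mpow (W t) (-(1 / p)) := by
    rw [mpow_mul hW]
    congr 1
    ring
  have hv0' : v0 = Matrix.toEuclideanLin (mpow (W t) (-(1 / p))) Tr := by
    rw [hv0, h2p, toEuclideanLin_mul_apply, hTr]
  have hinner0 : (⟪v0, r t⟫ : ℂ) = (‖Tr‖ : ℂ) ^ 2 := by
    rw [hv0', toEuclideanLin_herm_inner (mpow_isHermitian herm _), ← hTr,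
      inner_self_eq_norm_sq_to_K]
    norm_cast
  have hM1 : Matrix.toEuclideanLin (mpow (W t) (1 / p)) v0 = Tr := by
    have hprod : mpow (W t) (1 / p) * mpow (W t) (-(2 / p)) = mpow (W t) (-(1 / p)) := by
      rw [mpow_mul hW]
      congr 1
      ring
    rw [hv0, ← toEuclideanLin_mul_apply, hprod, hTr]
  have hg : 0 < ‖Tr‖ := by
    rw [norm_pos_iff]
    intro h0
    have hone : mpow (W t) (1 / p) * mpow (W t) (-(1 / p)) = 1 := by
      rw [mpow_mul hW]
      rw [show (1/p) + (-(1/p)) = (0:ℝ) by ring]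
      exact mpow_zero hW
    have h2 : Matrix.toEuclideanLin (mpow (W t) (1 / p)) Tr = r t := by
      rw [hTr, ← toEuclideanLin_mul_apply, hone, toEuclideanLin_one_apply]
    rw [h0, map_zero] at h2
    rw [← h2, norm_zero] at hr1
    exact one_ne_zero hr1.symm
  have hfin : ‖Tr‖ ^ p * w t ≤ C := by
    have h := hrealv v0
    rw [hM1, hinner0] at h
    have hnorm : ‖((‖Tr‖ : ℂ) ^ 2)‖ = ‖Tr‖ * ‖Tr‖ := by
      rw [norm_pow, Complex.norm_real, norm_norm, sq]
    rw [hnorm, Real.mul_rpow (norm_nonneg _) (norm_nonneg _)] at h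
    have hgp : 0 < ‖Tr‖ ^ p := Real.rpow_pos_of_pos hg p
    have h' : (‖Tr‖ ^ p * w t) * ‖Tr‖ ^ p ≤ C * ‖Tr‖ ^ p := by
      rw [show (‖Tr‖ ^ p * w t) * ‖Tr‖ ^ p = ‖Tr‖ ^ p * ‖Tr‖ ^ p * w t from by ring]
      exact h
    exact (mul_le_mul_iff_of_pos_right hgp).mp h'
  have hfinal := Real.rpow_le_rpow
    (mul_nonneg (Real.rpow_nonneg (norm_nonneg _) _) hw1.le) hfin
    (le_of_lt (by positivity : (0:ℝ) < 1/p))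
  rw [Real.mul_rpow (Real.rpow_nonneg (norm_nonneg _) _) hw1.le,
    ← Real.rpow_mul (norm_nonneg _), mul_one_div_cancel hpne, Real.rpow_one] at hfinal
  rw [mul_comm]
  exact hfinal
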